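/- The weak equivalences of a model structure on a finite lattice are decomposable: if (W, C, F) is a model structure on a finite lattice L and x ≤ y ≤ z with W x z, then W x y and W y z. -/

import Mathlib

/-- The five-element nonmodular lattice `N₅` with `0 < A < C < 1`, `0 < B < 1`,
and `B` incomparable to `A` and `C`. -/
inductive N5 : Type
  | zero | A | B | C | one
  deriving DecidableEq

instance : Fintype N5 where
  elems := {N5.zero, N5.A, N5.B, N5.C, N5.one}
  complete := by intro x; cases x <;> decide

namespace N5

def leBool : N5 → N5 → Bool
  | zero, _ => true
  | _, one => true
  | A, A => true
  | A, C => true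
  | B, B => true
  | C, C => true
  | _, _ => false

instance : LE N5 := ⟨fun x y => leBool x y = true⟩

instance : DecidableRel ((· ≤ ·) : N5 → N5 → Prop) :=
  fun x y => inferInstanceAs (Decidable (leBool x y = true))

def supFn (x y : N5) : N5 := if leBool x y then y else if leBool y x then x else one
def infFn (x y : N5) : N5 := if leBool x y then x else if leBool y x then y else zero

instance : Lattice N5 where
  le := (· ≤ ·)
  le_refl := by decide
  le_trans := by decide
  le_antisymm := by decide
  sup := supFn
  le_sup_left := by decide
  le_sup_right := by decide
  sup_le := by decide
  inf := infFn
  inf_le_left := by decide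
  inf_le_right := by decide
  le_inf := by decide

end N5

section Defs

variable {L : Type*} [Lattice L]

/-- `llp S a b`: `a ≤ b` and `(a, b)` has the left lifting property with respect to
every pair in `S`. -/
def llp (S : L → L → Prop) (a b : L) : Prop :=
  a ≤ b ∧ ∀ x y, S x y → a ≤ x → b ≤ y → b ≤ x

/-- `rlp S x y`: `x ≤ y` and every pair in `S` has the left lifting property with
respect to `(x, y)`. -/
def rlp (S : L → L → Prop) (x y : L) : Prop :=
  x ≤ y ∧ ∀ a b, S a b → a ≤ x → b ≤ y → b ≤ x

/-- A transfer system: a reflexive transitive subrelation of `≤` closed under pullbacks. -/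
structure IsTransferSystem (T : L → L → Prop) : Prop where
  subLE : ∀ x y, T x y → x ≤ y
  refl : ∀ x, T x x
  trans : ∀ x y z, T x y → T y z → T x z
  pullback : ∀ x y z, T x y → z ≤ y → T (x ⊓ z) z

/-- A cotransfer system: a reflexive transitive subrelation of `≤` closed under pushouts. -/
structure IsCotransferSystem (K : L → L → Prop) : Prop where
  subLE : ∀ x y, K x y → x ≤ y
  refl : ∀ x, K x x
  trans : ∀ x y z, K x y → K y z → K x z
  pushout : ∀ x y z, K x y → x ≤ z → K z (y ⊔ z)

/-- A wide decomposable subcategory of a lattice. -/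
structure IsWideDecomposable (W : L → L → Prop) : Prop where
  subLE : ∀ x y, W x y → x ≤ y
  refl : ∀ x, W x x
  trans : ∀ x y z, W x y → W y z → W x z
  decomp : ∀ x y z, W x z → x ≤ y → y ≤ z → W x y ∧ W y z

/-- A model structure on a lattice, given by weak equivalences `W`, cofibrations `C`
and fibrations `F`. -/
structure IsModelStructure (W C F : L → L → Prop) : Prop where
  W_subLE : ∀ x y, W x y → x ≤ y
  W_refl : ∀ x, W x x
  C_subLE : ∀ x y, C x y → x ≤ y
  C_refl : ∀ x, C x x
  F_subLE : ∀ x y, F x y → x ≤ y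
  F_refl : ∀ x, F x x
  two_three_comp : ∀ x y z, x ≤ y → y ≤ z → W x y → W y z → W x z
  two_three_right : ∀ x y z, x ≤ y → y ≤ z → W x y → W x z → W y z
  two_three_left : ∀ x y z, x ≤ y → y ≤ z → W y z → W x z → W x y
  lift_AC : ∀ x y, (C x y ∧ W x y) ↔ llp F x y
  lift_C : ∀ x y, C x y ↔ llp (fun a b => F a b ∧ W a b) x y
  lift_F : ∀ x y, F x y ↔ rlp (fun a b => C a b ∧ W a b) x y
  lift_AF : ∀ x y, (F x y ∧ W x y) ↔ rlp C x y
  fact_C_AF : ∀ x y, x ≤ y → ∃ z, x ≤ z ∧ z ≤ y ∧ C x z ∧ F z y ∧ W z y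
  fact_AC_F : ∀ x y, x ≤ y → ∃ z, x ≤ z ∧ z ≤ y ∧ C x z ∧ W x z ∧ F z y

/-- The smallest transfer system containing `S`: the intersection of all transfer
systems containing `S`. -/
def genTS (S : L → L → Prop) (x y : L) : Prop :=
  ∀ T : L → L → Prop, IsTransferSystem T → (∀ a b, S a b → T a b) → T x y

end Defs

/-- A bundled model structure on a lattice. -/
structure ModelStructure (L : Type*) [Lattice L] where
  W : L → L → Prop
  C : L → L → Prop
  F : L → L → Prop
  isModel : IsModelStructure W C F

/-- `M'` is a left Bousfield localization of `M`: same cofibrations, more weak equivalences. -/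
def IsLeftBousfieldLoc {L : Type*} [Lattice L] (M M' : ModelStructure L) : Prop :=
  M'.C = M.C ∧ ∀ x y, M.W x y → M'.W x y

/-- `M'` is a right Bousfield localization of `M`: same fibrations, more weak equivalences. -/
def IsRightBousfieldLoc {L : Type*} [Lattice L] (M M' : ModelStructure L) : Prop :=
  M'.F = M.F ∧ ∀ x y, M.W x y → M'.W x y


/-- Weak equivalences of a model structure on a finite lattice are
decomposable. -/
theorem weak_equivalences_decomposable (L : Type*) [Lattice L] [Fintype L]
    (W C F : L → L → Prop) (h : IsModelStructure W C F)
    (x y z : L) (hxy : x ≤ y) (hyz : y ≤ z) (hW : W x z) :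
    W x y ∧ W y z := by
  obtain ⟨w, hxw, hwz, hCxw, hWxw, hFwz⟩ := h.fact_AC_F x z (hxy.trans hyz)
  have hWwz : W w z := h.two_three_right x w z hxw hwz hWxw hW
  have hAFwz : rlp C w z := (h.lift_AF w z).mp ⟨hFwz, hWwz⟩
  have hACxw : llp F x w := (h.lift_AC x w).mp ⟨hCxw, hWxw⟩
  have hle2 : w ⊔ y ≤ z := sup_le hwz hyz
  have hACy : llp F y (w ⊔ y) := by
    refine ⟨le_sup_right, fun p q hF hyp hq => ?_⟩
    have hwp : w ≤ p := hACxw.2 p q hF (hxy.trans hyp) (le_sup_left.trans hq)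
    exact sup_le hwp hyp
  have hWy : W y (w ⊔ y) := ((h.lift_AC y (w ⊔ y)).mpr hACy).2
  have hAFw : rlp C w (w ⊔ y) := by
    refine ⟨le_sup_left, fun p q hC hpw hq => ?_⟩
    exact hAFwz.2 p q hC hpw (hq.trans hle2)
  have hWw : W w (w ⊔ y) := ((h.lift_AF w (w ⊔ y)).mpr hAFw).2
  have hWxwy : W x (w ⊔ y) := h.two_three_comp x w (w ⊔ y) hxw le_sup_left hWxw hWw
  have hWxy : W x y := h.two_three_left x y (w ⊔ y) hxy le_sup_right hWy hWxwy
  exact ⟨hWxy, h.two_three_right x y z hxy hyz hWxy hW⟩
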